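/- Let Ψ = (Ψ₀,Ψ₁,Ψ₂,Ψ₃): ℂ∖{0} → ℂ⁴∖{0} be holomorphic and projectively S¹-equivariant, in the sense that for every α ∈ ℝ and z ≠ 0 the vectors Ψ(e^{iα}z) and (Ψ₀(z), e^{iα}Ψ₁(z), e^{2iα}Ψ₂(z), e^{3iα}Ψ₃(z)) are ℂ-linearly dependent, and assume the induced projective map is nonconstant (i.e. there are z, z' with Ψ(z) and Ψ(z') not ℂ-linearly dependent). Then there exists μ = (μ₀,μ₁,μ₂,μ₃) ∈ ℂ⁴ with at least two nonzero entries such that for every z ≠ 0 the vectors Ψ(z) and (μ₀, μ₁ z, μ₂ z², μ₃ z³) are ℂ-linearly dependent. -/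

import Mathlib

noncomputable section

/-- The S¹-action of weights (0,1,2,3) on ℂ⁴. -/
def twist4 (α : ℝ) (v : Fin 4 → ℂ) : Fin 4 → ℂ :=
  ![v 0, Complex.exp (Complex.I * (α : ℂ)) * v 1,
    Complex.exp (2 * Complex.I * (α : ℂ)) * v 2,
    Complex.exp (3 * Complex.I * (α : ℂ)) * v 3]

/-- The curve z ↦ (μ₀, μ₁ z, μ₂ z², μ₃ z³). -/
def curve4 (μ : Fin 4 → ℂ) (z : ℂ) : Fin 4 → ℂ :=
  ![μ 0, μ 1 * z, μ 2 * z ^ 2, μ 3 * z ^ 3]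

/-!
Write `γ := curve4 (Ψ 1)` and fix `k` with `Ψ 1 k ≠ 0`. Since `twist4 α v = curve4 v (e^{iα})`,
equivariance at `z = 1` makes `Ψ` proportional to `γ` on the unit circle, so the holomorphic
function `z ↦ Ψ z k • γ z - γ z k • Ψ z` vanishes there, hence on all of `ℂ ∖ {0}` by the identity
theorem; as `γ z k = Ψ 1 k * z ^ k ≠ 0`, this makes `Ψ z` a nonzero multiple of `γ z`. If `Ψ 1`
had only one nonzero entry, `γ z` would be a multiple of `Ψ 1` and `Ψ` projectively constant.
-/

open Complex Metric Set Filter Topology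

theorem AnalyticOnNhd.eqOn_zero_of_eqOn_zero_of_isPreconnected
    {𝕜 E : Type*} [NontriviallyNormedField 𝕜] [NormedAddCommGroup E] [NormedSpace 𝕜 E]
    {f : 𝕜 → E} {U s : Set 𝕜} (hf : AnalyticOnNhd 𝕜 f U) (hU : IsPreconnected U)
    (hs : IsPreconnected s) (hsn : s.Nontrivial) (hsU : s ⊆ U) (hfs : EqOn f 0 s) :
    EqOn f 0 U := by
  obtain ⟨z₀, hz₀⟩ := hsn.nonempty
  have hacc : ∃ᶠ z in 𝓝[≠] z₀, z ∈ s :=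
    frequently_mem_iff_neBot.mpr <| hs.preperfect_of_nontrivial hsn z₀ hz₀
  exact hf.eqOn_zero_of_preconnected_of_frequently_eq_zero hU (hsU hz₀) (hacc.mono hfs)

theorem eqOn_zero_of_differentiableOn_of_eqOn_zero_sphere
    {E : Type*} [NormedAddCommGroup E] [NormedSpace ℂ E] [CompleteSpace E] {f : ℂ → E}
    (hf : DifferentiableOn ℂ f {z : ℂ | z ≠ 0}) (hfs : EqOn f 0 (sphere 0 1)) :
    EqOn f 0 {z : ℂ | z ≠ 0} := by
  have hrank : 1 < Module.rank ℝ ℂ := by rw [rank_real_complex]; norm_num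
  refine (hf.analyticOnNhd isOpen_compl_singleton).eqOn_zero_of_eqOn_zero_of_isPreconnected
    (isConnected_compl_singleton_of_one_lt_rank hrank 0).isPreconnected
    (isPreconnected_sphere hrank 0 1) ?_ ?_ hfs
  · exact ⟨1, by simp, -1, by simp, by norm_num⟩
  · rintro z hz rfl
    simp at hz

theorem twist4_eq_curve4 (α : ℝ) (v : Fin 4 → ℂ) :
    twist4 α v = curve4 v (exp (I * α)) := by
  ext i
  fin_cases i <;> simp [twist4, curve4, ← exp_nat_mul] <;> ring_nf

theorem curve4_apply (μ : Fin 4 → ℂ) (z : ℂ) (i : Fin 4) :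
    curve4 μ z i = μ i * z ^ (i : ℕ) := by
  fin_cases i <;> simp [curve4]

theorem differentiable_curve4 (μ : Fin 4 → ℂ) : Differentiable ℂ (curve4 μ) :=
  differentiable_pi.2 fun i => by simp only [curve4_apply]; fun_prop

theorem curve4_eq_pow_smul {μ : Fin 4 → ℂ} {k : Fin 4} (hμ : ∀ j, j ≠ k → μ j = 0) (z : ℂ) :
    curve4 μ z = z ^ (k : ℕ) • μ := by
  ext j
  rw [curve4_apply, Pi.smul_apply, smul_eq_mul]
  by_cases hj : j = k
  · rw [hj, mul_comm]
  · simp [hμ j hj]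

theorem exists_ne_zero_smul_eq_of_smul_eq_smul {ι K : Type*} [Field K]
    {v w : ι → K} {k : ι} (hw : w k ≠ 0) (hv : v ≠ 0) (h : v k • w = w k • v) :
    ∃ c : K, c ≠ 0 ∧ v = c • w := by
  refine ⟨v k / w k, fun hvk => hv ?_, ?_⟩
  · rw [(div_eq_zero_iff.1 hvk).resolve_right hw, zero_smul, eq_comm, smul_eq_zero] at h
    exact h.resolve_left hw
  · rw [div_eq_inv_mul, mul_smul, h, inv_smul_smul₀ hw]

theorem smul_curve4_eq_of_equivariant (Ψ : ℂ → (Fin 4 → ℂ))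
    (hhol : DifferentiableOn ℂ Ψ {z : ℂ | z ≠ 0})
    (hequiv : ∀ (α : ℝ), ∀ z : ℂ, z ≠ 0 →
      ∃ c : ℂ, c ≠ 0 ∧ Ψ (Complex.exp (Complex.I * (α : ℂ)) * z) = c • twist4 α (Ψ z))
    (k : Fin 4) {z : ℂ} (hz : z ≠ 0) :
    Ψ z k • curve4 (Ψ 1) z = curve4 (Ψ 1) z k • Ψ z := by
  have hdiff : DifferentiableOn ℂ
      (fun z => Ψ z k • curve4 (Ψ 1) z - curve4 (Ψ 1) z k • Ψ z) {z : ℂ | z ≠ 0} := by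
    have hΨk : DifferentiableOn ℂ (fun z => Ψ z k) {z : ℂ | z ≠ 0} :=
      differentiableOn_pi.1 hhol k
    have hγ := differentiable_curve4 (Ψ 1)
    have hγk : Differentiable ℂ (fun z => curve4 (Ψ 1) z k) := differentiable_pi.1 hγ k
    exact (hΨk.smul hγ.differentiableOn).sub (hγk.differentiableOn.smul hhol)
  have hcircle : EqOn (fun z => Ψ z k • curve4 (Ψ 1) z - curve4 (Ψ 1) z k • Ψ z) 0
      (sphere 0 1) := by
    intro w hw
    have hw_exp : exp (I * (arg w : ℂ)) = w := by
      simpa [mem_sphere_zero_iff_norm.1 hw, mul_comm] using norm_mul_exp_arg_mul_I w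
    obtain ⟨c, -, hc⟩ := hequiv (arg w) 1 one_ne_zero
    rw [mul_one, twist4_eq_curve4, hw_exp] at hc
    simp only [hc, Pi.smul_apply, smul_eq_mul, smul_smul, mul_comm, sub_self, Pi.zero_apply]
  exact sub_eq_zero.1 (eqOn_zero_of_differentiableOn_of_eqOn_zero_sphere hdiff hcircle hz)

/-- Every nonconstant holomorphic projectively S¹-equivariant map
Ψ : ℂ ∖ {0} → ℂ⁴ ∖ {0} is projectively equal to z ↦ (μ₀, μ₁z, μ₂z², μ₃z³) for some
μ ∈ ℂ⁴ with at least two nonzero entries. -/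
theorem statement6 (Ψ : ℂ → (Fin 4 → ℂ))
    (hnz : ∀ z : ℂ, z ≠ 0 → Ψ z ≠ 0)
    (hhol : DifferentiableOn ℂ Ψ {z : ℂ | z ≠ 0})
    (hequiv : ∀ (α : ℝ), ∀ z : ℂ, z ≠ 0 →
      ∃ c : ℂ, c ≠ 0 ∧ Ψ (Complex.exp (Complex.I * (α : ℂ)) * z) = c • twist4 α (Ψ z))
    (hnonconst : ∃ z z' : ℂ, z ≠ 0 ∧ z' ≠ 0 ∧ ∀ c : ℂ, Ψ z' ≠ c • Ψ z) :
    ∃ μ : Fin 4 → ℂ, (∃ i j : Fin 4, i ≠ j ∧ μ i ≠ 0 ∧ μ j ≠ 0) ∧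
      ∀ z : ℂ, z ≠ 0 → ∃ c : ℂ, c ≠ 0 ∧ Ψ z = c • curve4 μ z := by
  obtain ⟨k, hk⟩ : ∃ k, Ψ 1 k ≠ 0 := Function.ne_iff.1 (hnz 1 one_ne_zero)
  have hproj : ∀ z : ℂ, z ≠ 0 → ∃ c : ℂ, c ≠ 0 ∧ Ψ z = c • curve4 (Ψ 1) z := fun z hz =>
    exists_ne_zero_smul_eq_of_smul_eq_smul
      (by rw [curve4_apply]; exact mul_ne_zero hk (pow_ne_zero _ hz)) (hnz z hz)
      (smul_curve4_eq_of_equivariant Ψ hhol hequiv k hz)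
  refine ⟨Ψ 1, ?_, hproj⟩
  by_contra! hsingle
  have hμ : ∀ j, j ≠ k → Ψ 1 j = 0 := fun j hj => by_contra fun h => hk (hsingle j k hj h)
  obtain ⟨z, z', hz, hz', hne⟩ := hnonconst
  obtain ⟨c, hc, hΨz⟩ := hproj z hz
  obtain ⟨c', -, hΨz'⟩ := hproj z' hz'
  rw [curve4_eq_pow_smul hμ] at hΨz hΨz'
  refine hne (c' * z' ^ (k : ℕ) / (c * z ^ (k : ℕ))) ?_
  simp only [hΨz, hΨz', smul_smul]
  congr 1
  field_simp
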